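/- Let I ⊂ ℝ be an interval of finite positive length, k ≥ 1 an integer, and f ∈ C^k(I; ℝ) with |f^{(k)}(x)| ≥ A > 0 for all x ∈ I. Then for every ε > 0, the Lebesgue measure of {x ∈ I : |f(x)| ≤ ε} is at most k(k+1)((k+1)!)^{1/k} · (ε/A)^{1/k}. -/

import Mathlib

open MeasureTheory Set Polynomial

lemma contDiff_polyeval (p : ℝ[X]) (n : ℕ∞) : ContDiff ℝ n (fun x : ℝ => p.eval x) := by
  have h : (fun x : ℝ => p.eval x)
      = fun x => ∑ i ∈ Finset.range (p.natDegree + 1), p.coeff i * x ^ i := by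
    funext x; exact p.eval_eq_sum_range x
  rw [h]
  exact ContDiff.sum fun i _ => contDiff_const.mul (contDiff_id.pow i)

lemma iteratedDeriv_polyeval (n : ℕ) (p : ℝ[X]) :
    iteratedDeriv n (fun x : ℝ => p.eval x) = fun x => (Polynomial.derivative^[n] p).eval x := by
  induction n generalizing p with
  | zero => simp
  | succ n ih =>
    rw [iteratedDeriv_succ', Function.iterate_succ_apply]
    have h : deriv (fun x : ℝ => p.eval x) = fun x => (Polynomial.derivative p).eval x := by
      funext x; exact Polynomial.deriv p
    rw [h, ih]

lemma iteratedDeriv_polyeval_of_natDegree_le (n : ℕ) (p : ℝ[X]) (hp : p.natDegree ≤ n) (x : ℝ) :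
    iteratedDeriv n (fun x : ℝ => p.eval x) x = (n.factorial : ℝ) * p.coeff n := by
  rw [iteratedDeriv_polyeval]
  have h0 : (Polynomial.derivative^[n] p).natDegree ≤ 0 := by
    have := p.natDegree_iterate_derivative n
    omega
  rw [Polynomial.eq_C_of_natDegree_le_zero h0]
  simp only [Polynomial.eval_C]
  rw [Polynomial.coeff_iterate_derivative]
  simp [Nat.descFactorial_self, mul_comm]

lemma coeff_lagrange_basis {k : ℕ} (v : Fin (k+1) → ℝ) (i : Fin (k+1)) :
    (Lagrange.basis Finset.univ v i).coeff k =
      ∏ j ∈ Finset.univ.erase i, (v i - v j)⁻¹ := by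
  have h1 : Lagrange.basis Finset.univ v i =
      Polynomial.C (∏ j ∈ Finset.univ.erase i, (v i - v j)⁻¹) *
        ∏ j ∈ Finset.univ.erase i, (Polynomial.X - Polynomial.C (v j)) := by
    rw [Lagrange.basis, map_prod, ← Finset.prod_mul_distrib]
    rfl
  have hm : (∏ j ∈ Finset.univ.erase i, (Polynomial.X - Polynomial.C (v j))).Monic :=
    Polynomial.monic_prod_of_monic _ _ fun j _ => Polynomial.monic_X_sub_C _
  have hcard : (Finset.univ.erase i).card = k := by
    rw [Finset.card_erase_of_mem (Finset.mem_univ i), Finset.card_univ, Fintype.card_fin]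
    omega
  have hd : (∏ j ∈ Finset.univ.erase i, (Polynomial.X - Polynomial.C (v j))).natDegree = k := by
    rw [Polynomial.natDegree_prod_of_monic _ _ fun j _ => Polynomial.monic_X_sub_C _]
    simp [Polynomial.natDegree_X_sub_C, hcard]
  have : (∏ j ∈ Finset.univ.erase i, (Polynomial.X - Polynomial.C (v j))).coeff k = 1 := by
    have h2 := hm.coeff_natDegree
    rwa [hd] at h2
  rw [h1, Polynomial.coeff_C_mul, this, mul_one]

lemma coeff_interpolate {k : ℕ} (v : Fin (k+1) → ℝ) (r : Fin (k+1) → ℝ) :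
    (Lagrange.interpolate Finset.univ v r).coeff k =
      ∑ i, r i * ∏ j ∈ Finset.univ.erase i, (v i - v j)⁻¹ := by
  rw [Lagrange.interpolate_apply, Polynomial.finset_sum_coeff]
  exact Finset.sum_congr rfl fun i _ => by
    rw [Polynomial.coeff_C_mul, coeff_lagrange_basis]

lemma iteratedDerivWithin_interior {I : Set ℝ} {f : ℝ → ℝ} {n : ℕ} {x : ℝ}
    (hx : x ∈ interior I) :
    iteratedDerivWithin n f I x = iteratedDeriv n f x := by
  have h1 : iteratedFDerivWithin ℝ n f I x = iteratedFDerivWithin ℝ n f univ x := by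
    rw [← iteratedFDerivWithin_inter_open isOpen_interior hx,
      ← iteratedFDerivWithin_inter_open (s := univ) isOpen_interior hx,
      inter_eq_self_of_subset_right interior_subset, univ_inter]
  rw [← iteratedDerivWithin_univ]
  simp only [iteratedDerivWithin, h1]

lemma iterated_rolle (n : ℕ) : ∀ (g : ℝ → ℝ) (u : Set ℝ), IsOpen u →
    ContDiffOn ℝ (n+1) g u → ∀ (x : ℕ → ℝ),
    (∀ i j, i < j → j ≤ n+1 → x i < x j) →
    Ioo (x 0) (x (n+1)) ⊆ u →
    ContinuousOn g (Icc (x 0) (x (n+1))) →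
    (∀ i ≤ n+1, g (x i) = 0) →
    ∃ c ∈ Ioo (x 0) (x (n+1)), iteratedDeriv (n+1) g c = 0 := by
  induction n with
  | zero =>
    intro g u hu hg x hx hsub hcont hz
    obtain ⟨c, hc, hc0⟩ := exists_deriv_eq_zero (hx 0 1 one_pos le_rfl) hcont
      (by rw [hz 0 (by omega), hz 1 le_rfl])
    exact ⟨c, hc, by rwa [iteratedDeriv_one]⟩
  | succ n ih =>
    intro g u hu hg x hx hsub hcont hz
    -- Rolle on each consecutive pair
    have H : ∀ i : ℕ, ∃ y : ℝ, i ≤ n + 1 →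
        y ∈ Ioo (x i) (x (i+1)) ∧ deriv g y = 0 := by
      intro i
      by_cases hi : i ≤ n + 1
      · have hsub2 : Icc (x i) (x (i+1)) ⊆ Icc (x 0) (x (n+2)) := by
          apply Icc_subset_Icc
          · rcases Nat.eq_zero_or_pos i with h0 | h0
            · rw [h0]
            · exact (hx 0 i h0 (by omega)).le
          · rcases lt_or_eq_of_le (Nat.succ_le_succ hi) with h0 | h0
            · exact (hx (i+1) (n+2) h0 le_rfl).le
            · exact le_of_eq (congrArg x (by omega : i + 1 = n + 2))
        obtain ⟨c, hc, hc0⟩ := exists_deriv_eq_zero (hx i (i+1) (by omega) (by omega))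
          (hcont.mono hsub2) (by rw [hz i (by omega), hz (i+1) (by omega)])
        exact ⟨c, fun _ => ⟨hc, hc0⟩⟩
      · exact ⟨0, fun h => absurd h hi⟩
    choose c hc using H
    have hcmem : ∀ i ≤ n+1, c i ∈ Ioo (x i) (x (i+1)) := fun i hi => (hc i hi).1
    have hczero : ∀ i ≤ n+1, deriv g (c i) = 0 := fun i hi => (hc i hi).2
    have hmono : ∀ i j, i < j → j ≤ n+1 → c i < c j := by
      intro i j hij hj
      have h1 := (hcmem i (by omega)).2
      have h2 := (hcmem j hj).1
      calc c i < x (i+1) := h1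
        _ ≤ x j := by
          rcases lt_or_eq_of_le (Nat.succ_le_of_lt hij) with h0 | h0
          · exact (hx (i+1) j h0 (by omega)).le
          · exact le_of_eq (congrArg x (by omega : i + 1 = j))
        _ < c j := h2
    have hIooc : Ioo (c 0) (c (n+1)) ⊆ Ioo (x 0) (x (n+2)) := by
      apply Ioo_subset_Ioo
      · exact (hcmem 0 (by omega)).1.le
      · exact (hcmem (n+1) le_rfl).2.le
    have hg' : ContDiffOn ℝ (n+1) (deriv g) u := by
      apply hg.deriv_of_isOpen hu
      norm_cast
    have hcont' : ContinuousOn (deriv g) (Icc (c 0) (c (n+1))) := by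
      apply (hg.continuousOn_deriv_of_isOpen hu (by norm_cast; omega)).mono
      intro y hy
      exact hsub ⟨lt_of_lt_of_le (hcmem 0 (by omega)).1 hy.1,
        lt_of_le_of_lt hy.2 (hcmem (n+1) le_rfl).2⟩
    obtain ⟨ξ, hξ, hξ0⟩ := ih (deriv g) u hu hg' c hmono
      (fun y hy => hsub (hIooc hy)) hcont' hczero
    refine ⟨ξ, hIooc hξ, ?_⟩
    rw [iteratedDeriv_succ']
    exact hξ0

lemma core_estimate (I : Set ℝ) (hI : I.OrdConnected) (k : ℕ) (hk : 1 ≤ k) (f : ℝ → ℝ)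
    (hf : ContDiffOn ℝ k f I) (A ε : ℝ) (hA : 0 < A) (hε : 0 < ε)
    (hder : ∀ x ∈ I, A ≤ |iteratedDerivWithin k f I x|)
    (x : ℕ → ℝ) (hxI : ∀ i ≤ k, x i ∈ I) (hfx : ∀ i ≤ k, |f (x i)| ≤ ε)
    (δ : ℝ) (hδ : 0 < δ) (hgap : ∀ i < k, x i + δ ≤ x (i+1)) :
    δ ^ k ≤ ((k+1).factorial : ℝ) * ε / A := by
  obtain ⟨n, rfl⟩ : ∃ n, k = n + 1 := ⟨k - 1, by omega⟩
  set k := n + 1 with hkdef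
  -- separation of points
  have hsep : ∀ j i, i < j → j ≤ k → x i + δ ≤ x j := by
    intro j
    induction j with
    | zero => omega
    | succ j ihj =>
      intro i hij hjk
      rcases Nat.lt_succ_iff_lt_or_eq.mp hij with h | h
      · have h1 := ihj i h (by omega)
        have h2 := hgap j (by omega)
        linarith
      · subst h; exact hgap i (by omega)
  have hmono : ∀ i j, i < j → j ≤ k → x i < x j := fun i j hij hjk => by
    have := hsep j i hij hjk; linarith
  have hdist : ∀ i j, i ≤ k → j ≤ k → i ≠ j → δ ≤ |x i - x j| := by
    intro i j hi hj hij
    rcases hij.lt_or_gt with h | h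
    · rw [abs_sub_comm, abs_of_pos (by linarith [hmono i j h hj])]
      linarith [hsep j i h hj]
    · rw [abs_of_pos (by linarith [hmono j i h hi])]
      linarith [hsep i j h hi]
  set v : Fin (k+1) → ℝ := fun i => x i.val with hv
  have hInj : Set.InjOn v (Finset.univ : Finset (Fin (k+1))) := by
    intro a _ b _ hab
    by_contra hne
    have : a.val ≠ b.val := fun h => hne (Fin.ext h)
    have := hdist a.val b.val (by omega) (by omega) this
    rw [hv] at hab
    simp only [hab, sub_self, abs_zero] at this
    linarith
  set P : Polynomial ℝ := Lagrange.interpolate Finset.univ v (fun i => f (x i.val)) with hP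
  have hdeg : P.natDegree ≤ k := by
    by_cases hP0 : P = 0
    · simp [hP0]
    · have h1 := Lagrange.degree_interpolate_lt (fun i => f (x i.val)) hInj
      have h2 : P.degree < ((k+1 : ℕ) : WithBot ℕ) := by
        rw [hP]
        simpa using h1
      exact Nat.lt_succ_iff.mp ((Polynomial.natDegree_lt_iff_degree_lt hP0).mpr h2)
  set g : ℝ → ℝ := f - fun t => P.eval t with hg
  have hIcc : Icc (x 0) (x k) ⊆ I := hI.out (hxI 0 (by omega)) (hxI k le_rfl)
  set u : Set ℝ := interior I with hu
  have hfu : ContDiffOn ℝ k f u := hf.mono interior_subset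
  have hPu : ContDiffOn ℝ k (fun t => P.eval t) u := (contDiff_polyeval P k).contDiffOn
  have hgu : ContDiffOn ℝ k g u := hfu.sub hPu
  have hzero : ∀ i ≤ k, g (x i) = 0 := by
    intro i hi
    have : P.eval (v ⟨i, by omega⟩) = f (x i) := by
      have h := Lagrange.eval_interpolate_at_node (fun i => f (x i.val)) hInj
        (Finset.mem_univ ⟨i, by omega⟩)
      exact h
    simp only [hg, Pi.sub_apply]
    rw [show v ⟨i, by omega⟩ = x i from rfl] at this
    rw [this]; ring
  have hcont : ContinuousOn g (Icc (x 0) (x k)) :=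
    (hf.continuousOn.mono hIcc).sub ((contDiff_polyeval P k).continuous.continuousOn)
  have hIoou : Ioo (x 0) (x k) ⊆ u :=
    interior_maximal (Ioo_subset_Icc_self.trans hIcc) isOpen_Ioo
  obtain ⟨ξ, hξ, hξ0⟩ := iterated_rolle n g u isOpen_interior hgu x
    (fun i j hij hj => hmono i j hij hj) hIoou hcont hzero
  have hξu : ξ ∈ u := hIoou hξ
  have hξI : ξ ∈ I := interior_subset hξu
  -- split the iterated derivative
  have hsplit : iteratedDeriv k g ξ = iteratedDeriv k f ξ - iteratedDeriv k (fun t => P.eval t) ξ := by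
    have e0 : ∀ (h : ℝ → ℝ), iteratedDerivWithin k h u ξ = iteratedDeriv k h ξ := fun h =>
      iteratedDerivWithin_interior (by rwa [isOpen_interior.interior_eq])
    rw [← e0 g, ← e0 f, ← e0 (fun t => P.eval t), hg,
      iteratedDerivWithin_sub hξu isOpen_interior.uniqueDiffOn (hfu ξ hξu) (hPu ξ hξu)]
  have hfξ : iteratedDeriv k f ξ = iteratedDeriv k (fun t => P.eval t) ξ := by
    rw [hξ0] at hsplit
    linarith [hsplit]
  have hPd : iteratedDeriv k (fun t => P.eval t) ξ = (k.factorial : ℝ) * P.coeff k :=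
    iteratedDeriv_polyeval_of_natDegree_le k P hdeg ξ
  have hAle : A ≤ (k.factorial : ℝ) * |P.coeff k| := by
    have h1 := hder ξ hξI
    rw [iteratedDerivWithin_interior hξu, hfξ, hPd, abs_mul, abs_of_nonneg
      (by positivity : (0:ℝ) ≤ (k.factorial : ℝ))] at h1
    exact h1
  -- coefficient bound
  have hco : P.coeff k = ∑ i, f (x i.val) * ∏ j ∈ Finset.univ.erase i, (v i - v j)⁻¹ :=
    coeff_interpolate v (fun i => f (x i.val))
  have hprod : ∀ i : Fin (k+1), |∏ j ∈ Finset.univ.erase i, (v i - v j)⁻¹| ≤ δ⁻¹ ^ k := by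
    intro i
    rw [Finset.abs_prod]
    have hcard : (Finset.univ.erase i).card = k := by
      rw [Finset.card_erase_of_mem (Finset.mem_univ i), Finset.card_univ, Fintype.card_fin]
      omega
    calc ∏ j ∈ Finset.univ.erase i, |(v i - v j)⁻¹|
        ≤ ∏ _j ∈ Finset.univ.erase i, δ⁻¹ := by
          apply Finset.prod_le_prod (fun j _ => abs_nonneg _)
          intro j hj
          have hij : i.val ≠ j.val := by
            intro h
            exact (Finset.mem_erase.mp hj).1 (Fin.ext h.symm)
          rw [abs_inv]
          exact inv_anti₀ hδ (hdist i.val j.val (by omega) (by omega) hij)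
      _ = δ⁻¹ ^ k := by rw [Finset.prod_const, hcard]
  have hcoeff_bd : |P.coeff k| ≤ (k+1 : ℝ) * ε * δ⁻¹ ^ k := by
    rw [hco]
    calc |∑ i, f (x i.val) * ∏ j ∈ Finset.univ.erase i, (v i - v j)⁻¹|
        ≤ ∑ i, |f (x i.val) * ∏ j ∈ Finset.univ.erase i, (v i - v j)⁻¹| :=
          Finset.abs_sum_le_sum_abs _ _
      _ ≤ ∑ _i : Fin (k+1), ε * δ⁻¹ ^ k := by
          apply Finset.sum_le_sum
          intro i _
          rw [abs_mul]
          exact mul_le_mul (hfx i.val (by omega)) (hprod i) (abs_nonneg _) hε.le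
      _ = (k+1 : ℝ) * ε * δ⁻¹ ^ k := by
          rw [Finset.sum_const, Finset.card_univ, Fintype.card_fin]
          push_cast
          ring
  -- conclude
  rw [le_div_iff₀ hA]
  have hδk : (0:ℝ) < δ ^ k := pow_pos hδ k
  have hfin : A ≤ (k.factorial : ℝ) * ((k+1 : ℝ) * ε * δ⁻¹ ^ k) := by
    calc A ≤ (k.factorial : ℝ) * |P.coeff k| := hAle
      _ ≤ (k.factorial : ℝ) * ((k+1 : ℝ) * ε * δ⁻¹ ^ k) := by
          apply mul_le_mul_of_nonneg_left hcoeff_bd (by positivity)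
  have hinv : δ ^ k * δ⁻¹ ^ k = 1 := by
    rw [← mul_pow, mul_inv_cancel₀ hδ.ne', one_pow]
  calc δ ^ k * A ≤ δ ^ k * ((k.factorial : ℝ) * ((k+1 : ℝ) * ε * δ⁻¹ ^ k)) :=
        mul_le_mul_of_nonneg_left hfin hδk.le
    _ = ((k.factorial : ℝ) * (k+1 : ℝ)) * ε * (δ ^ k * δ⁻¹ ^ k) := by ring
    _ = ((k+1).factorial : ℝ) * ε := by
        rw [hinv, mul_one]
        have h9 : (k+1).factorial = (k+1) * k.factorial := Nat.factorial_succ k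
        rw [h9]
        push_cast
        ring

section Select

variable {l r : ℝ}

private lemma phi_fin {B : Set ℝ} (hBlr : B ⊆ Icc l r) (t : ℝ) :
    volume (B ∩ Iic t) ≠ ⊤ :=
  ((measure_mono (inter_subset_left.trans hBlr)).trans_lt isCompact_Icc.measure_lt_top).ne

private lemma phi_mono {B : Set ℝ} (hBlr : B ⊆ Icc l r) {t t' : ℝ} (h : t ≤ t') :
    (volume (B ∩ Iic t)).toReal ≤ (volume (B ∩ Iic t')).toReal :=
  ENNReal.toReal_mono (phi_fin hBlr t') (measure_mono (inter_subset_inter_right _ (Iic_subset_Iic.mpr h)))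

private lemma phi_lip {B : Set ℝ} (hBlr : B ⊆ Icc l r) {t t' : ℝ} (h : t ≤ t') :
    (volume (B ∩ Iic t')).toReal ≤ (volume (B ∩ Iic t)).toReal + (t' - t) := by
  have hsub : B ∩ Iic t' ⊆ (B ∩ Iic t) ∪ Ioc t t' := by
    intro b hb
    rcases le_or_gt b t with h1 | h1
    · exact Or.inl ⟨hb.1, h1⟩
    · exact Or.inr ⟨h1, hb.2⟩
  have h1 : volume (B ∩ Iic t') ≤ volume (B ∩ Iic t) + ENNReal.ofReal (t' - t) := by
    calc volume (B ∩ Iic t') ≤ volume ((B ∩ Iic t) ∪ Ioc t t') := measure_mono hsub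
      _ ≤ volume (B ∩ Iic t) + volume (Ioc t t') := measure_union_le _ _
      _ = volume (B ∩ Iic t) + ENNReal.ofReal (t' - t) := by rw [Real.volume_Ioc]
  calc (volume (B ∩ Iic t')).toReal
      ≤ (volume (B ∩ Iic t) + ENNReal.ofReal (t' - t)).toReal := by
        apply ENNReal.toReal_mono _ h1
        exact ENNReal.add_ne_top.mpr ⟨phi_fin hBlr t, ENNReal.ofReal_ne_top⟩
    _ = (volume (B ∩ Iic t)).toReal + (t' - t) := by
        rw [ENNReal.toReal_add (phi_fin hBlr t) ENNReal.ofReal_ne_top,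
          ENNReal.toReal_ofReal (by linarith)]

private lemma pick_first (B : Set ℝ) (hB : MeasurableSet B) (hBlr : B ⊆ Icc l r)
    (d η : ℝ) (hd : 0 < d) (hη : 0 < η) (hdm : d ≤ (volume B).toReal) :
    ∃ x₀ ∈ B, ENNReal.ofReal (d - η) ≤ volume (B ∩ Iic x₀) ∧
      (volume (B ∩ Iic x₀)).toReal ≤ d := by
  set φ : ℝ → ℝ := fun t => (volume (B ∩ Iic t)).toReal with hφ
  have hBr : B ∩ Iic r = B :=
    inter_eq_self_of_subset_left (fun b hb => (hBlr hb).2)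
  set S : Set ℝ := {t | d ≤ φ t} with hS
  have hrS : r ∈ S := by
    simp only [hS, mem_setOf_eq, hφ, hBr]
    exact hdm
  have hbdd : BddBelow S := by
    refine ⟨l, fun t ht => ?_⟩
    by_contra hlt
    push_neg at hlt
    have hempty : B ∩ Iic t = ∅ := by
      ext b
      simp only [mem_inter_iff, mem_Iic, mem_empty_iff_false, iff_false]
      rintro ⟨hbB, hbt⟩
      exact absurd ((hBlr hbB).1.trans hbt) (not_le.mpr hlt)
    have : φ t = 0 := by simp [hφ, hempty]
    rw [hS, mem_setOf_eq, this] at ht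
    linarith
  set t₀ : ℝ := sInf S with ht₀
  have hlow : ∀ t, t < t₀ → φ t < d := by
    intro t ht
    by_contra h
    push_neg at h
    exact absurd (csInf_le hbdd h) (not_le.mpr ht)
  have hup : ∀ t, t₀ < t → d ≤ φ t := by
    intro t ht
    obtain ⟨s, hsS, hst⟩ := exists_lt_of_csInf_lt ⟨r, hrS⟩ ht
    exact le_trans hsS (phi_mono hBlr hst.le)
  have hge : d ≤ φ t₀ := by
    refine le_of_forall_pos_le_add fun η' hη' => ?_
    calc d ≤ φ (t₀ + η') := hup _ (by linarith)
      _ ≤ φ t₀ + (t₀ + η' - t₀) := phi_lip hBlr (by linarith)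
      _ = φ t₀ + η' := by ring_nf
  have hle : φ t₀ ≤ d := by
    refine le_of_forall_pos_le_add fun η' hη' => ?_
    calc φ t₀ ≤ φ (t₀ - η') + (t₀ - (t₀ - η')) := phi_lip hBlr (by linarith)
      _ ≤ d + η' := by
          have := (hlow (t₀ - η') (by linarith)).le
          linarith
  -- positive mass just left of t₀
  have hpos : volume (B ∩ Ioc (t₀ - η) t₀) ≠ 0 := by
    intro h0
    have hsub : B ∩ Iic t₀ ⊆ (B ∩ Iic (t₀ - η)) ∪ (B ∩ Ioc (t₀ - η) t₀) := by
      intro b hb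
      rcases le_or_gt b (t₀ - η) with h1 | h1
      · exact Or.inl ⟨hb.1, h1⟩
      · exact Or.inr ⟨hb.1, h1, hb.2⟩
    have h1 : volume (B ∩ Iic t₀) ≤ volume (B ∩ Iic (t₀ - η)) := by
      calc volume (B ∩ Iic t₀) ≤ volume (B ∩ Iic (t₀ - η)) + volume (B ∩ Ioc (t₀ - η) t₀) :=
            (measure_mono hsub).trans (measure_union_le _ _)
        _ = volume (B ∩ Iic (t₀ - η)) := by rw [h0, add_zero]
    have h2 : φ t₀ ≤ φ (t₀ - η) := ENNReal.toReal_mono (phi_fin hBlr _) h1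
    have h3 := hlow (t₀ - η) (by linarith)
    linarith
  obtain ⟨x₀, hx₀B, hx₀mem⟩ := nonempty_of_measure_ne_zero hpos
  refine ⟨x₀, hx₀B, ?_, ?_⟩
  · have h1 : φ t₀ ≤ φ x₀ + η := by
      calc φ t₀ ≤ φ x₀ + (t₀ - x₀) := phi_lip hBlr hx₀mem.2
        _ ≤ φ x₀ + η := by
            have := hx₀mem.1
            linarith
    have h2 : d - η ≤ φ x₀ := by linarith
    calc ENNReal.ofReal (d - η) ≤ ENNReal.ofReal (φ x₀) := ENNReal.ofReal_le_ofReal h2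
      _ = volume (B ∩ Iic x₀) := ENNReal.ofReal_toReal (phi_fin hBlr x₀)
  · exact le_trans (phi_mono hBlr hx₀mem.2) hle

private lemma select_points (k : ℕ) : ∀ (B : Set ℝ), MeasurableSet B → B ⊆ Icc l r →
    ∀ d η : ℝ, 0 < d → 0 < η → (k+1 : ℝ) * d ≤ (volume B).toReal →
    ∃ x : ℕ → ℝ, (∀ i ≤ k, x i ∈ B) ∧ (∀ i < k, x i + (d - η) ≤ x (i+1)) ∧
      ENNReal.ofReal (d - η) ≤ volume (B ∩ Iic (x 0)) := by
  induction k with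
  | zero =>
    intro B hB hBlr d η hd hη hm
    obtain ⟨x₀, hx₀B, hx₀1, _⟩ := pick_first B hB hBlr d η hd hη (by push_cast at hm; linarith)
    exact ⟨fun _ => x₀, fun i _ => hx₀B, fun i hi => absurd hi (by omega), hx₀1⟩
  | succ k ih =>
    intro B hB hBlr d η hd hη hm
    have hd_le : d ≤ (volume B).toReal := by nlinarith [hd.le]
    obtain ⟨x₀, hx₀B, hx₀1, hx₀2⟩ := pick_first B hB hBlr d η hd hη hd_le
    set B₂ : Set ℝ := B \ Iic x₀ with hB₂
    have hB₂meas : MeasurableSet B₂ := hB.diff measurableSet_Iic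
    have hB₂sub : B₂ ⊆ Icc l r := diff_subset.trans hBlr
    have hB₂fin : volume B₂ ≠ ⊤ :=
      ((measure_mono (hB₂sub)).trans_lt isCompact_Icc.measure_lt_top).ne
    have hBfin : volume B ≠ ⊤ :=
      ((measure_mono hBlr).trans_lt isCompact_Icc.measure_lt_top).ne
    have hvol : (volume (B ∩ Iic x₀)).toReal + (volume B₂).toReal = (volume B).toReal := by
      rw [← ENNReal.toReal_add (phi_fin hBlr x₀) hB₂fin, measure_inter_add_diff B measurableSet_Iic]
    have hm₂ : (k+1 : ℝ) * d ≤ (volume B₂).toReal := by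
      have : (volume B₂).toReal ≥ (volume B).toReal - d := by linarith
      push_cast at hm ⊢
      linarith
    obtain ⟨y, hy1, hy2, hy3⟩ := ih B₂ hB₂meas hB₂sub d η hd hη hm₂
    have hy0gt : x₀ < y 0 := not_le.mp (hy1 0 (by omega)).2
    refine ⟨fun i => match i with | 0 => x₀ | (j+1) => y j, ?_, ?_, ?_⟩
    · intro i hi
      match i with
      | 0 => exact hx₀B
      | (j+1) => exact (hy1 j (by omega)).1
    · intro i hi
      match i with
      | 0 =>
        have hsub : B₂ ∩ Iic (y 0) ⊆ Ioc x₀ (y 0) := by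
          rintro b ⟨⟨_, hb2⟩, hb3⟩
          exact ⟨not_le.mp hb2, hb3⟩
        have h1 : ENNReal.ofReal (d - η) ≤ ENNReal.ofReal (y 0 - x₀) := by
          calc ENNReal.ofReal (d - η) ≤ volume (B₂ ∩ Iic (y 0)) := hy3
            _ ≤ volume (Ioc x₀ (y 0)) := measure_mono hsub
            _ = ENNReal.ofReal (y 0 - x₀) := Real.volume_Ioc
        have h2 : d - η ≤ y 0 - x₀ :=
          (ENNReal.ofReal_le_ofReal_iff (by linarith)).mp h1
        simp only []
        linarith
      | (j+1) => exact hy2 j (by omega)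
    · exact hx₀1
  end Select

/-- Kleinbock–Margulis sublevel set estimate (Lemma A.1). -/
theorem stmt0 (I : Set ℝ) (hI : I.OrdConnected) (hIbd : Bornology.IsBounded I)
    (hIne : I.Nonempty)
    (k : ℕ) (hk : 1 ≤ k) (f : ℝ → ℝ) (hf : ContDiffOn ℝ k f I)
    (A : ℝ) (hA : 0 < A)
    (hder : ∀ x ∈ I, A ≤ |iteratedDerivWithin k f I x|)
    (ε : ℝ) (hε : 0 < ε) :
    volume {x ∈ I | |f x| ≤ ε} ≤
      ENNReal.ofReal ((k * (k + 1) : ℝ) * ((Nat.factorial (k + 1) : ℝ)) ^ ((1 : ℝ) / k) *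
        (ε / A) ^ ((1 : ℝ) / k)) := by
  set B : Set ℝ := {x ∈ I | |f x| ≤ ε} with hBdef
  -- measurability of B
  have hImeas : MeasurableSet I := hI.measurableSet
  have habs : ContinuousOn (fun x => |f x|) I := hf.continuousOn.abs
  obtain ⟨U, hUopen, hU⟩ := continuousOn_iff'.mp habs (Ioi ε) isOpen_Ioi
  have hBeq : B = I \ (U ∩ I) := by
    ext b
    simp only [hBdef, mem_setOf_eq, mem_diff, mem_inter_iff, not_and]
    constructor
    · rintro ⟨hbI, hble⟩
      refine ⟨hbI, fun hbU => ?_⟩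
      have hb2 : b ∈ (fun x => |f x|) ⁻¹' Ioi ε ∩ I := by
        rw [hU]; exact ⟨hbU, hbI⟩
      exact absurd hb2.1 (by simpa using not_lt.mpr hble)
    · rintro ⟨hbI, hbU⟩
      refine ⟨hbI, ?_⟩
      by_contra h
      push_neg at h
      have hb2 : b ∈ U ∩ I := by
        rw [← hU]; exact ⟨h, hbI⟩
      exact hbU hb2.1 hbI
  have hBmeas : MeasurableSet B := by
    rw [hBeq]
    exact hImeas.diff (hUopen.measurableSet.inter hImeas)
  obtain ⟨l, r, hIlr⟩ : ∃ l r, I ⊆ Icc l r :=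
    bddBelow_bddAbove_iff_subset_Icc.mp ⟨hIbd.bddBelow, hIbd.bddAbove⟩
  have hBsub : B ⊆ Icc l r := fun b hb => hIlr hb.1
  have hBfin : volume B ≠ ⊤ :=
    ((measure_mono hBsub).trans_lt isCompact_Icc.measure_lt_top).ne
  set m : ℝ := (volume B).toReal with hm
  set c : ℝ := (((k+1).factorial : ℝ) * ε / A) ^ ((1:ℝ)/k) with hc
  have hQpos : (0:ℝ) < ((k+1).factorial : ℝ) * ε / A := by positivity
  have hcpos : 0 < c := Real.rpow_pos_of_pos hQpos _
  have hck : c ^ k = ((k+1).factorial : ℝ) * ε / A := by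
    rw [hc, one_div]
    exact Real.rpow_inv_natCast_pow hQpos.le (by omega)
  -- key claim
  have hkey : m ≤ (k+1 : ℝ) * c := by
    by_contra hcon
    push_neg at hcon
    set d : ℝ := m / (k+1) with hd
    have hkpos : (0:ℝ) < (k:ℝ) + 1 := by positivity
    have hcd : c < d := by
      rw [hd, lt_div_iff₀ hkpos]
      linarith [hcon]
    have hdpos : 0 < d := lt_trans hcpos hcd
    set η : ℝ := (d - c)/2 with hη
    have hηpos : 0 < η := by rw [hη]; linarith
    have hδc : c < d - η := by rw [hη]; linarith
    obtain ⟨x, hx1, hx2, _⟩ := select_points (l := l) (r := r) k B hBmeas hBsub d η hdpos hηpos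
      (by rw [hd]; field_simp; exact le_rfl)
    have hest := core_estimate I hI k hk f hf A ε hA hε hder x
      (fun i hi => (hx1 i hi).1) (fun i hi => (hx1 i hi).2)
      (d - η) (by linarith) hx2
    rw [← hck] at hest
    have : c ^ k < (d - η) ^ k := by
      apply pow_lt_pow_left₀ hδc hcpos.le (by omega)
    linarith
  -- conclude
  have hvolB : volume B = ENNReal.ofReal m := (ENNReal.ofReal_toReal hBfin).symm
  rw [hvolB]
  apply ENNReal.ofReal_le_ofReal
  have hcsplit : c = (((k+1).factorial : ℝ)) ^ ((1:ℝ)/k) * (ε / A) ^ ((1:ℝ)/k) := by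
    rw [hc, mul_div_assoc, Real.mul_rpow (by positivity) (by positivity)]
  have h1 : (0:ℝ) ≤ (((k+1).factorial : ℝ)) ^ ((1:ℝ)/k) := by positivity
  have h2 : (0:ℝ) ≤ (ε / A) ^ ((1:ℝ)/k) := by positivity
  have h3 : (k+1 : ℝ) ≤ (k * (k+1) : ℝ) := by
    have : (1:ℝ) ≤ (k:ℝ) := by exact_mod_cast hk
    nlinarith
  calc m ≤ (k+1 : ℝ) * c := hkey
    _ = (k+1 : ℝ) * ((((k+1).factorial : ℝ)) ^ ((1:ℝ)/k) * (ε / A) ^ ((1:ℝ)/k)) := by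
        rw [hcsplit]
    _ ≤ (k * (k+1) : ℝ) * ((((k+1).factorial : ℝ)) ^ ((1:ℝ)/k) * (ε / A) ^ ((1:ℝ)/k)) := by
        apply mul_le_mul_of_nonneg_right h3 (by positivity)
    _ = (k * (k + 1) : ℝ) * ((Nat.factorial (k + 1) : ℝ)) ^ ((1 : ℝ) / k) *
        (ε / A) ^ ((1 : ℝ) / k) := by ring
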